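/- arXiv:2502.04716 — 2 statements merged into one kernel-verified Lean document; each statement's English description precedes it below -/
import Mathlib

section
/- Let K ⊆ ℝᵐ be a smooth cone, A : ℝⁿ → ℝᵐ a linear map and b ∈ ℝᵐ, assume the set S = {x ∈ ℝⁿ : Ax + b ∈ K} is nonempty and that Im A ∩ K = {0}. If b ∈ Im A, then the inclusion Ax + b ∈ K has a global error bound: there exists α > 0 such that dist(x, S) ≤ α·dist(Ax + b, K) for all x ∈ ℝⁿ. -/
open scoped RealInnerProductSpace

noncomputable section

variable {X Y : Type*} [NormedAddCommGroup X] [InnerProductSpace ℝ X]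
  [NormedAddCommGroup Y] [InnerProductSpace ℝ Y]

/-- A cone: closed under nonnegative scalar multiplication. -/
def IsCone (C : Set X) : Prop := ∀ x ∈ C, ∀ t : ℝ, 0 ≤ t → t • x ∈ C

/-- A regular cone: a closed, convex, pointed cone with nonempty interior. -/
def IsRegularCone (C : Set X) : Prop :=
  IsCone C ∧ IsClosed C ∧ Convex ℝ C ∧ C ∩ (-C) = {0} ∧ (interior C).Nonempty

/-- The polar cone of `C`. -/
def polarCone (C : Set X) : Set X := {y | ∀ x ∈ C, ⟪x, y⟫ ≤ 0}

/-- The normal cone of a convex set `D` at a point `xbar`. -/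
def normalCone (D : Set X) (xbar : X) : Set X := {y | ∀ x ∈ D, ⟪y, x - xbar⟫ ≤ 0}

/-- `F` is a face of the convex set `C`. -/
def IsFaceOf (C F : Set X) : Prop :=
  F ⊆ C ∧ Convex ℝ F ∧ ∀ x ∈ C, ∀ y ∈ C, ∀ t : ℝ, 0 < t → t < 1 →
    (1 - t) • x + t • y ∈ F → x ∈ F ∧ y ∈ F

/-- The dimension of a set: the dimension of its affine hull. -/
def setDim (F : Set X) : ℕ := Module.finrank ℝ (affineSpan ℝ F).direction

/-- A strictly convex cone: a regular cone every proper nonzero face of which has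
dimension one. -/
def IsStrictlyConvexCone (C : Set X) : Prop :=
  IsRegularCone C ∧ ∀ F : Set X, IsFaceOf C F → F ≠ C → F ≠ {0} → setDim F = 1

/-- The ray generated by `x`. -/
def Ray (x : X) : Set X := {y | ∃ t : ℝ, 0 ≤ t ∧ y = t • x}

/-- `S` is a ray: generated by a nonzero vector. -/
def IsRay (S : Set X) : Prop := ∃ x : X, x ≠ 0 ∧ S = Ray x

/-- An extreme ray of `C`: a ray contained in `C` that is a face of `C`. -/
def IsExtremeRay (C S : Set X) : Prop := IsRay S ∧ S ⊆ C ∧ IsFaceOf C S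

/-- A smooth cone: a regular cone such that every boundary point lies on an extreme ray
and the normal cone at every nonzero point of any extreme ray has dimension one. -/
def IsSmoothCone (C : Set X) : Prop :=
  IsRegularCone C ∧
  (∀ x ∈ frontier C, ∃ S : Set X, IsExtremeRay C S ∧ x ∈ S) ∧
  (∀ S : Set X, IsExtremeRay C S → ∀ x ∈ S, x ≠ 0 → setDim (normalCone C x) = 1)


lemma aux_lower (K : Set X) (hcone : IsCone K) (h0 : (0:X) ∈ K) {y : X} {c t : ℝ} (ht : 0 ≤ t)
    (hy : c ≤ Metric.infDist y K) : c * t ≤ Metric.infDist (t • y) K := by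
  rcases ht.eq_or_lt with rfl | ht
  · simpa using Metric.infDist_nonneg
  · have hne : K.Nonempty := ⟨0, h0⟩
    have : Nonempty K := hne.to_subtype
    rw [Metric.infDist_eq_iInf]
    apply le_ciInf
    rintro ⟨z, hz⟩
    have hz' : t⁻¹ • z ∈ K := hcone z hz t⁻¹ (by positivity)
    have hle : Metric.infDist y K ≤ dist y (t⁻¹ • z) := Metric.infDist_le_dist_of_mem hz'
    have hdist : dist (t • y) z = t * dist y (t⁻¹ • z) := by
      rw [dist_eq_norm, dist_eq_norm, ← norm_smul_of_nonneg ht.le]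
      congr 1
      rw [smul_sub, smul_inv_smul₀ ht.ne']
    calc c * t ≤ Metric.infDist y K * t := by nlinarith [Metric.infDist_nonneg (x := y) (s := K)]
      _ ≤ dist y (t⁻¹ • z) * t := by nlinarith
      _ = dist (t • y) z := by rw [hdist]; ring


theorem global_error_bound_of_b_mem_range {n m : ℕ}
    (K : Set (EuclideanSpace ℝ (Fin m))) (hK : IsSmoothCone K)
    (A : EuclideanSpace ℝ (Fin n) →L[ℝ] EuclideanSpace ℝ (Fin m))
    (b : EuclideanSpace ℝ (Fin m))
    (S : Set (EuclideanSpace ℝ (Fin n))) (hS : S = {x | A x + b ∈ K}) (hSne : S.Nonempty)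
    (hrange : Set.range A ∩ K = {0}) (hb : b ∈ Set.range A) :
    ∃ α : ℝ, 0 < α ∧ ∀ x, Metric.infDist x S ≤ α * Metric.infDist (A x + b) K := by
  obtain ⟨hcone, hclosed, _, _, ⟨p, hp⟩⟩ := hK.1
  have h0K : (0 : EuclideanSpace ℝ (Fin m)) ∈ K := by
    simpa using hcone p (interior_subset hp) 0 le_rfl
  obtain ⟨u, hu⟩ := hb
  obtain ⟨x₀, hx₀⟩ := hSne
  have hx₀K : A x₀ + b ∈ K := by rw [hS] at hx₀; exact hx₀
  have hx₀0 : A x₀ + b = 0 := by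
    have : A x₀ + b ∈ Set.range A ∩ K := ⟨⟨x₀ + u, by rw [map_add, hu]⟩, hx₀K⟩
    rw [hrange] at this; exact this
  set N : Submodule ℝ (EuclideanSpace ℝ (Fin n)) := LinearMap.ker (A : EuclideanSpace ℝ (Fin n) →ₗ[ℝ] EuclideanSpace ℝ (Fin m)) with hN
  -- key lower bound on the orthogonal complement
  have key : ∃ c : ℝ, 0 < c ∧ ∀ w : EuclideanSpace ℝ (Fin n), w ∈ Nᗮ →
      c * ‖w‖ ≤ Metric.infDist (A w) K := by
    by_cases hbot : (Nᗮ : Submodule ℝ (EuclideanSpace ℝ (Fin n))) = ⊥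
    · refine ⟨1, one_pos, fun w hw => ?_⟩
      have hw0 : w = 0 := by rw [hbot] at hw; simpa using hw
      simpa [hw0] using Metric.infDist_nonneg
    · obtain ⟨w₀, hw₀V, hw₀⟩ := Submodule.exists_mem_ne_zero_of_ne_bot hbot
      set T : Set ↥Nᗮ := Metric.sphere 0 1 with hT
      have hTc : IsCompact T := isCompact_sphere 0 1
      have hTne : T.Nonempty := by
        refine ⟨⟨‖w₀‖⁻¹ • w₀, Submodule.smul_mem _ _ hw₀V⟩, ?_⟩
        simp only [hT, Metric.mem_sphere, dist_zero_right]
        rw [Submodule.coe_norm]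
        simp [norm_smul, norm_inv, inv_mul_cancel₀ (norm_ne_zero_iff.2 hw₀)]
      have hf : Continuous fun w : ↥Nᗮ => Metric.infDist (A (w : EuclideanSpace ℝ (Fin n))) K :=
        (Metric.continuous_infDist_pt K).comp (A.continuous.comp continuous_subtype_val)
      obtain ⟨w₁, hw₁T, hmin⟩ := hTc.exists_isMinOn hTne hf.continuousOn
      have hw₁norm : ‖(w₁ : EuclideanSpace ℝ (Fin n))‖ = 1 := by
        have h := hw₁T
        simp only [hT, Metric.mem_sphere, dist_zero_right] at h
        rwa [Submodule.coe_norm] at h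
      have hw₁ne : (w₁ : EuclideanSpace ℝ (Fin n)) ≠ 0 := by
        intro h; rw [h, norm_zero] at hw₁norm; norm_num at hw₁norm
      have hAw₁ : A (w₁ : EuclideanSpace ℝ (Fin n)) ∉ K := by
        intro hmem
        have h1 : A (w₁ : EuclideanSpace ℝ (Fin n)) ∈ Set.range A ∩ K := ⟨⟨_, rfl⟩, hmem⟩
        rw [hrange] at h1
        have hker : (w₁ : EuclideanSpace ℝ (Fin n)) ∈ N := h1
        exact hw₁ne (Submodule.disjoint_def.mp N.orthogonal_disjoint _ hker w₁.2)
      set c : ℝ := Metric.infDist (A (w₁ : EuclideanSpace ℝ (Fin n))) K with hc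
      have hcpos : 0 < c :=
        (hclosed.notMem_iff_infDist_pos ⟨0, h0K⟩).mp hAw₁
      refine ⟨c, hcpos, fun w hw => ?_⟩
      rcases eq_or_ne w 0 with rfl | hwne
      · simpa using Metric.infDist_nonneg
      · have hnpos : (0:ℝ) < ‖w‖ := norm_pos_iff.2 hwne
        set w' : ↥Nᗮ := ⟨‖w‖⁻¹ • w, Submodule.smul_mem _ _ hw⟩ with hw'
        have hw'T : w' ∈ T := by
          simp only [hT, Metric.mem_sphere, dist_zero_right]
          rw [Submodule.coe_norm]
          simp [hw', norm_smul, inv_mul_cancel₀ hnpos.ne']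
        have hcle : c ≤ Metric.infDist (A ((w' : EuclideanSpace ℝ (Fin n)))) K := hmin hw'T
        have := aux_lower K hcone h0K (norm_nonneg w) hcle
        have heq : ‖w‖ • A ((w' : EuclideanSpace ℝ (Fin n))) = A w := by
          rw [← map_smul]
          congr 1
          simp [hw', smul_smul, mul_inv_cancel₀ hnpos.ne']
        rwa [heq] at this
  obtain ⟨c, hcpos, hkey⟩ := key
  refine ⟨c⁻¹, inv_pos.2 hcpos, fun x => ?_⟩
  set z := x - x₀ with hz
  set k : EuclideanSpace ℝ (Fin n) := (N.orthogonalProjectionOnto z : EuclideanSpace ℝ (Fin n)) with hk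
  have hkN : k ∈ N := (N.orthogonalProjectionOnto z).2
  have hwmem : z - k ∈ Nᗮ := N.sub_starProjection_mem_orthogonal z
  have hmemS : x₀ + k ∈ S := by
    rw [hS]
    show A (x₀ + k) + b ∈ K
    have hAk : A k = 0 := hkN
    rw [map_add, hAk, add_zero, hx₀0]
    exact h0K
  have h1 : Metric.infDist x S ≤ ‖z - k‖ := by
    have h := Metric.infDist_le_dist_of_mem (x := x) hmemS
    rwa [dist_eq_norm, show x - (x₀ + k) = z - k by rw [hz]; abel] at h
  have hAk : A k = 0 := hkN
  have hAeq : A (z - k) = A x + b := by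
    have h' : A (z - k) = A x - A x₀ := by rw [map_sub, hAk, sub_zero, hz, map_sub]
    rw [h', eq_neg_of_add_eq_zero_left hx₀0]; abel
  have h2 := hkey (z - k) hwmem
  rw [hAeq] at h2
  rw [← le_inv_mul_iff₀ hcpos] at h2
  exact h1.trans h2
end
end

section
/- Let K ⊆ ℝᵐ be a smooth cone, A : ℝⁿ → ℝᵐ a linear map and b ∈ ℝᵐ, assume the set S = {x ∈ ℝⁿ : Ax + b ∈ K} is nonempty and that {0} ≠ Im A ∩ K ⊆ bd K. If dim(Im A) ≠ 1 and b ∈ Im A, then the Abadie constraint qualification fails on S (there exists x ∈ S with A*(N_K(Ax + b)) ≠ N_S(x)), and consequently the inclusion Ax + b ∈ K has no global error bound: there is no α > 0 with dist(x, S) ≤ α·dist(Ax + b, K) for all x ∈ ℝⁿ. -/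
open scoped RealInnerProductSpace

noncomputable section

variable {X Y : Type*} [NormedAddCommGroup X] [InnerProductSpace ℝ X]
  [NormedAddCommGroup Y] [InnerProductSpace ℝ Y]

/-- Obtuse angle criterion at a nearest point of a convex set. -/
lemma proj_obtuse {K : Set X} (hconv : Convex ℝ K) {p z : X} (hp : p ∈ K)
    (hmin : ∀ x ∈ K, dist z p ≤ dist z x) : ∀ x ∈ K, ⟪z - p, x - p⟫ ≤ 0 := by
  intro x hx
  rcases eq_or_ne x p with rfl | hxp
  · simp
  by_contra h
  push_neg at h
  set c : ℝ := ⟪z - p, x - p⟫ with hc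
  have hd : (0:ℝ) < ‖x - p‖^2 := by
    have : x - p ≠ 0 := sub_ne_zero.mpr hxp
    exact pow_pos (norm_pos_iff.mpr this) 2
  set t : ℝ := min 1 (c / ‖x - p‖^2) with ht
  have ht0 : 0 < t := lt_min one_pos (div_pos h hd)
  have ht1 : t ≤ 1 := min_le_left _ _
  have htc : t * ‖x - p‖^2 ≤ c := by
    have := min_le_right 1 (c / ‖x - p‖^2)
    calc t * ‖x - p‖^2 ≤ (c / ‖x - p‖^2) * ‖x - p‖^2 := by
          exact mul_le_mul_of_nonneg_right this (le_of_lt hd)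
      _ = c := div_mul_cancel₀ _ (ne_of_gt hd)
  have hq : p + t • (x - p) ∈ K := by
    have := hconv hp hx (by linarith : (0:ℝ) ≤ 1 - t) (le_of_lt ht0) (by ring)
    convert this using 1
    module
  have hle : dist z p ≤ dist z (p + t • (x - p)) := hmin _ hq
  have hz : z - (p + t • (x - p)) = (z - p) - t • (x - p) := by abel
  have hnorm : ‖z - (p + t • (x - p))‖^2
      = ‖z - p‖^2 - 2 * (t * c) + t^2 * ‖x - p‖^2 := by
    rw [hz, norm_sub_sq_real, real_inner_smul_right, norm_smul,
      Real.norm_eq_abs, abs_of_pos ht0]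
    ring
  have hle2 : ‖z - p‖^2 ≤ ‖z - (p + t • (x - p))‖^2 := by
    have h1 : ‖z - p‖ ≤ ‖z - (p + t • (x - p))‖ := by
      simpa [dist_eq_norm] using hle
    exact pow_le_pow_left₀ (norm_nonneg _) h1 2
  rw [hnorm] at hle2
  nlinarith

set_option maxHeartbeats 2000000 in
theorem ACQ_fails_and_no_global_error_bound {n m : ℕ}
    (K : Set (EuclideanSpace ℝ (Fin m))) (hK : IsSmoothCone K)
    (A : EuclideanSpace ℝ (Fin n) →L[ℝ] EuclideanSpace ℝ (Fin m))
    (b : EuclideanSpace ℝ (Fin m))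
    (S : Set (EuclideanSpace ℝ (Fin n))) (hS : S = {x | A x + b ∈ K}) (hSne : S.Nonempty)
    (hrange1 : Set.range A ∩ K ≠ {0}) (hrange2 : Set.range A ∩ K ⊆ frontier K)
    (hdim : Module.finrank ℝ (LinearMap.range (A : EuclideanSpace ℝ (Fin n) →ₗ[ℝ] EuclideanSpace ℝ (Fin m))) ≠ 1) (hb : b ∈ Set.range A) :
    (∃ x ∈ S, ContinuousLinearMap.adjoint A '' normalCone K (A x + b) ≠ normalCone S x) ∧
    ¬ ∃ α : ℝ, 0 < α ∧ ∀ x, Metric.infDist x S ≤ α * Metric.infDist (A x + b) K := by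
  obtain ⟨hreg, hsm1, hsm2⟩ := hK
  obtain ⟨hcone, hclosed, hconv, hpointed, hint⟩ := hreg
  obtain ⟨e, he⟩ := hint
  have heK : e ∈ K := interior_subset he
  have h0K : (0 : EuclideanSpace ℝ (Fin m)) ∈ K := by
    simpa using hcone e heK 0 le_rfl
  have h0R : (0 : EuclideanSpace ℝ (Fin m)) ∈ Set.range A := ⟨0, map_zero A⟩
  -- a nonzero element of range A ∩ K
  obtain ⟨z₀, hz₀mem, hz₀ne⟩ : ∃ z₀ ∈ Set.range ⇑A ∩ K, z₀ ≠ 0 := by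
    by_contra h
    push_neg at h
    apply hrange1
    apply Set.Subset.antisymm
    · intro x hx
      simpa using h x hx
    · intro x hx
      rcases hx with rfl
      exact ⟨h0R, h0K⟩
  obtain ⟨hz₀R, hz₀K⟩ := hz₀mem
  -- every element of range A ∩ K is a nonnegative multiple of z₀
  have key : ∀ z ∈ Set.range ⇑A ∩ K, ∃ s : ℝ, 0 ≤ s ∧ z = s • z₀ := by
    rintro z ⟨hzR, hzK⟩
    have hmK : (1/2 : ℝ) • z₀ + (1/2 : ℝ) • z ∈ K :=
      hconv hz₀K hzK (by norm_num) (by norm_num) (by norm_num)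
    have hmR : (1/2 : ℝ) • z₀ + (1/2 : ℝ) • z ∈ Set.range ⇑A := by
      obtain ⟨u₀, hu₀⟩ := hz₀R
      obtain ⟨u, hu⟩ := hzR
      exact ⟨(1/2 : ℝ) • u₀ + (1/2 : ℝ) • u, by simp [map_add, map_smul, hu₀, hu]⟩
    rcases eq_or_ne ((1/2 : ℝ) • z₀ + (1/2 : ℝ) • z) 0 with h0 | hne
    · exfalso
      have hzz : z = -z₀ := by
        have h2 := congrArg (fun u => (2:ℝ) • u) h0
        simp only [smul_add, smul_smul, smul_zero] at h2
        norm_num at h2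
        linear_combination (norm := module) h2
      have : z₀ ∈ K ∩ (-K) := by
        refine ⟨hz₀K, ?_⟩
        rw [Set.mem_neg]
        rw [hzz] at hzK
        simpa using hzK
      rw [hpointed] at this
      exact hz₀ne this
    · obtain ⟨Sr, hSr, hmSr⟩ := hsm1 _ (hrange2 ⟨hmR, hmK⟩)
      obtain ⟨⟨x', hx'ne, hx'eq⟩, hSrK, hface⟩ := hSr
      obtain ⟨hz₀Sr, hzSr⟩ :=
        hface.2.2 z₀ hz₀K z hzK (1/2) (by norm_num) (by norm_num)
          (by norm_num; exact hmSr)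
      rw [hx'eq] at hz₀Sr hzSr
      obtain ⟨c, hc0, hceq⟩ := hz₀Sr
      obtain ⟨a, ha0, haeq⟩ := hzSr
      have hcne : c ≠ 0 := by
        rintro rfl
        simp only [zero_smul] at hceq
        exact hz₀ne hceq
      refine ⟨a / c, div_nonneg ha0 hc0, ?_⟩
      rw [haeq, hceq, smul_smul]
      congr 1
      field_simp
  -- z₀ lies on an extreme ray, the normal cone at z₀ has dimension 1
  have hz₀fr : z₀ ∈ frontier K := hrange2 ⟨hz₀R, hz₀K⟩
  obtain ⟨S₀, hS₀, hz₀S₀⟩ := hsm1 z₀ hz₀fr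
  have hdim1 : Module.finrank ℝ (affineSpan ℝ (normalCone K z₀)).direction = 1 :=
    hsm2 S₀ hS₀ z₀ hz₀S₀ hz₀ne
  have h0N : (0 : EuclideanSpace ℝ (Fin m)) ∈ normalCone K z₀ := by
    intro x hx
    simp
  -- any nonzero normal vector makes a strictly negative inner product with e - z₀
  have hstrict : ∀ u ∈ normalCone K z₀, u ≠ 0 → ⟪u, e - z₀⟫ < 0 := by
    intro u hu hune
    obtain ⟨δ, hδ, hball⟩ := Metric.isOpen_iff.1 isOpen_interior e he
    have hunorm : (0:ℝ) < ‖u‖ := norm_pos_iff.mpr hune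
    have hxK : e + ((δ/2) * ‖u‖⁻¹) • u ∈ K := by
      apply interior_subset
      apply hball
      rw [Metric.mem_ball, dist_eq_norm]
      have h1 : ‖e + ((δ/2) * ‖u‖⁻¹) • u - e‖ = (δ/2) * ‖u‖⁻¹ * ‖u‖ := by
        rw [add_sub_cancel_left, norm_smul, Real.norm_eq_abs, abs_of_pos]
        positivity
      rw [h1]
      rw [mul_assoc, inv_mul_cancel₀ (ne_of_gt hunorm), mul_one]
      linarith
    have h2 := hu _ hxK
    have h3 : e + ((δ/2) * ‖u‖⁻¹) • u - z₀ = (e - z₀) + ((δ/2) * ‖u‖⁻¹) • u := by abel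
    rw [h3, inner_add_right, real_inner_smul_right, real_inner_self_eq_norm_sq] at h2
    have h4 : (0:ℝ) < (δ/2) * ‖u‖⁻¹ * ‖u‖^2 := by positivity
    linarith
  have hND : ∀ u ∈ normalCone K z₀, u ∈ (affineSpan ℝ (normalCone K z₀)).direction := by
    intro u hu
    have h1 : u ∈ affineSpan ℝ (normalCone K z₀) := subset_affineSpan ℝ _ hu
    have h2 : (0 : EuclideanSpace ℝ (Fin m)) ∈ affineSpan ℝ (normalCone K z₀) :=
      subset_affineSpan ℝ _ h0N
    simpa using AffineSubspace.vsub_mem_direction h1 h2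
  obtain ⟨v, hvN, hvne⟩ : ∃ v ∈ normalCone K z₀, v ≠ 0 := by
    by_contra h
    push_neg at h
    have hNeq : normalCone K z₀ = {0} := by
      apply Set.Subset.antisymm
      · intro x hx
        have := h x hx
        simpa using this
      · intro x hx
        rcases hx with rfl
        exact h0N
    rw [hNeq] at hdim1
    rw [direction_affineSpan, vectorSpan_singleton] at hdim1
    simp at hdim1
  have hvD : Submodule.span ℝ {v} = (affineSpan ℝ (normalCone K z₀)).direction := by
    apply Submodule.eq_of_le_of_finrank_le
    · rw [Submodule.span_singleton_le_iff_mem]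
      exact hND v hvN
    · rw [hdim1, finrank_span_singleton hvne]
  have hvray : ∀ u ∈ normalCone K z₀, ∃ t : ℝ, 0 ≤ t ∧ u = t • v := by
    intro u hu
    have h1 : u ∈ Submodule.span ℝ {v} := by
      rw [hvD]
      exact hND u hu
    obtain ⟨t, ht⟩ := Submodule.mem_span_singleton.mp h1
    rcases eq_or_ne u 0 with rfl | hune
    · exact ⟨0, le_rfl, by simp⟩
    · refine ⟨t, ?_, ht.symm⟩
      have h2 := hstrict u hu hune
      have h3 := hstrict v hvN hvne
      rw [← ht, real_inner_smul_left] at h2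
      nlinarith
  -- rank of A is at least 2
  have hz₀R' : z₀ ∈ LinearMap.range (A : EuclideanSpace ℝ (Fin n) →ₗ[ℝ] EuclideanSpace ℝ (Fin m)) := LinearMap.mem_range.mpr hz₀R
  have hrank2 : 2 ≤ Module.finrank ℝ (LinearMap.range (A : EuclideanSpace ℝ (Fin n) →ₗ[ℝ] EuclideanSpace ℝ (Fin m))) := by
    rcases Nat.lt_or_ge (Module.finrank ℝ (LinearMap.range (A : EuclideanSpace ℝ (Fin n) →ₗ[ℝ] EuclideanSpace ℝ (Fin m)))) 2 with h | h
    · exfalso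
      have h0 : Module.finrank ℝ (LinearMap.range (A : EuclideanSpace ℝ (Fin n) →ₗ[ℝ] EuclideanSpace ℝ (Fin m))) = 0 := by omega
      have hbot : LinearMap.range (A : EuclideanSpace ℝ (Fin n) →ₗ[ℝ] EuclideanSpace ℝ (Fin m)) = ⊥ := Submodule.finrank_eq_zero.mp h0
      rw [hbot] at hz₀R'
      exact hz₀ne (Submodule.mem_bot ℝ |>.mp hz₀R')
    · exact h
  obtain ⟨w₁, hw₁⟩ := hz₀R
  obtain ⟨ub, hub⟩ := hb
  have hw₁ne : w₁ ≠ 0 := by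
    rintro rfl
    rw [map_zero] at hw₁
    exact hz₀ne hw₁.symm
  set x₁ := w₁ - ub with hx₁
  have hAx₁' : A x₁ = z₀ - b := by rw [hx₁, map_sub, hw₁, hub]
  have hAx₁ : A x₁ + b = z₀ := by rw [hAx₁']; abel
  have hx₁S : x₁ ∈ S := by
    rw [hS]
    show A x₁ + b ∈ K
    rw [hAx₁]
    exact hz₀K
  -- the subspace U and an orthogonal vector y
  set U : Submodule ℝ (EuclideanSpace ℝ (Fin n)) :=
    LinearMap.ker (A : EuclideanSpace ℝ (Fin n) →ₗ[ℝ] EuclideanSpace ℝ (Fin m)) ⊔ Submodule.span ℝ {w₁} with hUdef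
  have hUne : U ≠ ⊤ := by
    intro hU'
    have h1 : Module.finrank ℝ U ≤
        Module.finrank ℝ (LinearMap.ker (A : EuclideanSpace ℝ (Fin n) →ₗ[ℝ] EuclideanSpace ℝ (Fin m))) + Module.finrank ℝ (Submodule.span ℝ {w₁}) :=
      Submodule.finrank_add_le_finrank_add_finrank _ _
    rw [finrank_span_singleton hw₁ne] at h1
    have h2 : Module.finrank ℝ (LinearMap.range (A : EuclideanSpace ℝ (Fin n) →ₗ[ℝ] EuclideanSpace ℝ (Fin m))) + Module.finrank ℝ (LinearMap.ker (A : EuclideanSpace ℝ (Fin n) →ₗ[ℝ] EuclideanSpace ℝ (Fin m)))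
        = Module.finrank ℝ (EuclideanSpace ℝ (Fin n)) :=
      LinearMap.finrank_range_add_finrank_ker (A : EuclideanSpace ℝ (Fin n) →ₗ[ℝ] EuclideanSpace ℝ (Fin m))
    have h3 : Module.finrank ℝ U = Module.finrank ℝ (EuclideanSpace ℝ (Fin n)) := by
      rw [hU', finrank_top]
    omega
  obtain ⟨y, hyU, hyne⟩ : ∃ y ∈ Uᗮ, y ≠ 0 := by
    by_contra h
    push_neg at h
    have : Uᗮ = ⊥ := by
      rw [Submodule.eq_bot_iff]
      exact h
    exact hUne (Submodule.orthogonal_eq_bot_iff.mp this)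
  have hSU : ∀ x ∈ S, x - x₁ ∈ U := by
    intro x hx
    rw [hS] at hx
    have hxK : A x + b ∈ K := hx
    have hxR : A x + b ∈ Set.range ⇑A := ⟨x + ub, by rw [map_add, hub]⟩
    obtain ⟨s, hs0, hseq⟩ := key _ ⟨hxR, hxK⟩
    have hAx : A x = s • z₀ - b := by rw [← hseq]; abel
    have hker : x - x₁ - (s - 1) • w₁ ∈ LinearMap.ker (A : EuclideanSpace ℝ (Fin n) →ₗ[ℝ] EuclideanSpace ℝ (Fin m)) := by
      rw [LinearMap.mem_ker, ContinuousLinearMap.coe_coe, map_sub, map_sub, map_smul, hAx, hAx₁', hw₁]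
      module
    have hspan : (s - 1) • w₁ ∈ Submodule.span ℝ ({w₁} : Set (EuclideanSpace ℝ (Fin n))) :=
      Submodule.smul_mem _ _ (Submodule.mem_span_singleton_self w₁)
    have : x - x₁ = (x - x₁ - (s - 1) • w₁) + (s - 1) • w₁ := by abel
    rw [this]
    exact Submodule.add_mem U (Submodule.mem_sup_left hker) (Submodule.mem_sup_right hspan)
  have hyNS : ∀ y' : EuclideanSpace ℝ (Fin n), y' ∈ Uᗮ → y' ∈ normalCone S x₁ := by
    intro y' hy' x hx
    have h1 : ⟪x - x₁, y'⟫ = 0 := (Submodule.mem_orthogonal U y').mp hy' _ (hSU x hx)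
    rw [real_inner_comm] at h1
    rw [h1]
  constructor
  · -- ACQ fails at x₁
    refine ⟨x₁, hx₁S, ?_⟩
    intro hEq
    have hy1 : y ∈ ContinuousLinearMap.adjoint A '' normalCone K (A x₁ + b) := by
      rw [hEq]
      exact hyNS y hyU
    have hy2 : -y ∈ ContinuousLinearMap.adjoint A '' normalCone K (A x₁ + b) := by
      rw [hEq]
      exact hyNS (-y) (Submodule.neg_mem _ hyU)
    rw [hAx₁] at hy1 hy2
    obtain ⟨u1, hu1, hadj1⟩ := hy1
    obtain ⟨u2, hu2, hadj2⟩ := hy2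
    obtain ⟨t1, ht1, rfl⟩ := hvray u1 hu1
    obtain ⟨t2, ht2, rfl⟩ := hvray u2 hu2
    rw [map_smul] at hadj1 hadj2
    have hsum : (t1 + t2) • (ContinuousLinearMap.adjoint A v) = 0 := by
      rw [add_smul, hadj1, hadj2]
      abel
    rcases smul_eq_zero.mp hsum with h | h
    · have ht10 : t1 = 0 := by linarith
      apply hyne
      rw [← hadj1, ht10, zero_smul]
    · apply hyne
      rw [← hadj1, h, smul_zero]
  · -- no global error bound
    rintro ⟨α, hα, hEB⟩
    -- a direction w in range A, independent of z₀, with ⟪v, w⟫ ≤ 0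
    obtain ⟨w, hwR, hwsp, hvw⟩ : ∃ w, w ∈ Set.range ⇑A ∧
        w ∉ Submodule.span ℝ {z₀} ∧ ⟪v, w⟫ ≤ 0 := by
      obtain ⟨w', hw'R, hw'sp⟩ : ∃ w', w' ∈ Set.range ⇑A ∧ w' ∉ Submodule.span ℝ {z₀} := by
        by_contra h
        push_neg at h
        have hle : LinearMap.range (A : EuclideanSpace ℝ (Fin n) →ₗ[ℝ] EuclideanSpace ℝ (Fin m)) ≤ Submodule.span ℝ {z₀} := by
          intro x hx
          exact h x (LinearMap.mem_range.mp hx)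
        have h1 : Module.finrank ℝ (LinearMap.range (A : EuclideanSpace ℝ (Fin n) →ₗ[ℝ] EuclideanSpace ℝ (Fin m))) ≤
            Module.finrank ℝ (Submodule.span ℝ ({z₀} : Set (EuclideanSpace ℝ (Fin m)))) :=
          Submodule.finrank_mono hle
        rw [finrank_span_singleton hz₀ne] at h1
        omega
      rcases le_or_gt ⟪v, w'⟫ 0 with h | h
      · exact ⟨w', hw'R, hw'sp, h⟩
      · refine ⟨-w', ?_, ?_, ?_⟩
        · obtain ⟨u, hu⟩ := hw'R
          exact ⟨-u, by rw [map_neg, hu]⟩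
        · intro hmem
          exact hw'sp (by simpa using Submodule.neg_mem _ hmem)
        · rw [inner_neg_right]
          linarith
    -- orthogonal component of w relative to z₀
    set a : ℝ := ⟪z₀, w⟫ / ‖z₀‖^2 with ha
    set wp := w - a • z₀ with hwp
    have hz₀n : (‖z₀‖:ℝ)^2 ≠ 0 := pow_ne_zero 2 (norm_ne_zero_iff.mpr hz₀ne)
    have hwpne : wp ≠ 0 := by
      intro h0
      apply hwsp
      have : w = a • z₀ := by rwa [hwp, sub_eq_zero] at h0
      rw [this]
      exact Submodule.smul_mem _ _ (Submodule.mem_span_singleton_self z₀)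
    have hortho : ⟪wp, z₀⟫ = 0 := by
      rw [hwp, inner_sub_left, real_inner_smul_left, real_inner_self_eq_norm_sq,
        real_inner_comm z₀ w, ha]
      field_simp
      ring
    have hw_decomp : w = wp + a • z₀ := by rw [hwp]; abel
    have hwpw : ⟪wp, w⟫ = ‖wp‖^2 := by
      calc ⟪wp, w⟫ = ⟪wp, wp + a • z₀⟫ := by rw [← hw_decomp]
        _ = ⟪wp, wp⟫ + a * ⟪wp, z₀⟫ := by rw [inner_add_right, real_inner_smul_right]
        _ = ‖wp‖^2 := by rw [hortho, real_inner_self_eq_norm_sq]; ring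
    set c₀ := ‖wp‖ with hc₀
    have hc₀pos : 0 < c₀ := norm_pos_iff.mpr hwpne
    -- distance lower bound to the ray
    have hlow : ∀ t s : ℝ, 0 ≤ t → t * c₀ ≤ ‖(z₀ + t • w) - s • z₀‖ := by
      intro t s ht
      have h1 : ⟪wp, (z₀ + t • w) - s • z₀⟫ = t * ‖wp‖^2 := by
        rw [inner_sub_right, inner_add_right, real_inner_smul_right, real_inner_smul_right,
          hortho, hwpw]
        ring
      have h2 := real_inner_le_norm wp ((z₀ + t • w) - s • z₀)
      rw [h1] at h2
      nlinarith
    -- the tangent property: the distance to K along z₀ + t w is o(t)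
    have htan : ∀ ε : ℝ, 0 < ε → ∃ t : ℝ, 0 < t ∧ Metric.infDist (z₀ + t • w) K < ε * t := by
      intro ε hε
      by_contra hcon
      push_neg at hcon
      have hKne : K.Nonempty := ⟨0, h0K⟩
      have hexists : ∀ j : ℕ, ∃ p ∈ K,
          Metric.infDist (z₀ + (1/(j+1) : ℝ) • w) K = dist (z₀ + (1/(j+1) : ℝ) • w) p :=
        fun j => hclosed.exists_infDist_eq_dist hKne _
      choose p hpK hpdist using hexists
      set t : ℕ → ℝ := fun j => 1/(j+1) with htdef
      have htpos : ∀ j, 0 < t j := by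
        intro j
        have : (0:ℝ) < (j:ℝ) + 1 := by positivity
        positivity
      set q : ℕ → EuclideanSpace ℝ (Fin m) := fun j => z₀ + t j • w with hqdef
      have hqp : ∀ j, ε * t j ≤ ‖q j - p j‖ := by
        intro j
        rw [← dist_eq_norm]
        have h1 := hcon (t j) (htpos j)
        rw [hpdist j] at h1
        exact h1
      have hqppos : ∀ j, (0:ℝ) < ‖q j - p j‖ := by
        intro j
        have := hqp j
        have := mul_pos hε (htpos j)
        linarith
      set vv : ℕ → EuclideanSpace ℝ (Fin m) := fun j => ‖q j - p j‖⁻¹ • (q j - p j) with hvvdef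
      have hvnorm : ∀ j, ‖vv j‖ = 1 := by
        intro j
        rw [hvvdef]
        simp only [norm_smul, norm_inv, norm_norm]
        rw [inv_mul_cancel₀ (ne_of_gt (hqppos j))]
      have hobtuse : ∀ j, ∀ x ∈ K, ⟪q j - p j, x - p j⟫ ≤ 0 := by
        intro j
        apply proj_obtuse hconv (hpK j)
        intro x hx
        rw [← hpdist j]
        exact Metric.infDist_le_dist_of_mem hx
      have hvvob : ∀ j, ∀ x ∈ K, ⟪vv j, x - p j⟫ ≤ 0 := by
        intro j x hx
        rw [hvvdef]
        simp only [real_inner_smul_left]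
        have h1 := hobtuse j x hx
        have h2 : (0:ℝ) ≤ ‖q j - p j‖⁻¹ := by positivity
        exact mul_nonpos_iff.mpr (Or.inl ⟨h2, h1⟩)
      have hvw' : ∀ j, ε ≤ ⟪vv j, w⟫ := by
        intro j
        have h1 : ⟪vv j, q j - p j⟫ = ‖q j - p j‖ := by
          rw [hvvdef]
          simp only [real_inner_smul_left]
          rw [real_inner_self_eq_norm_sq, pow_two, ← mul_assoc,
            inv_mul_cancel₀ (ne_of_gt (hqppos j)), one_mul]
        have h2 : ⟪vv j, z₀ - p j⟫ ≤ 0 := hvvob j z₀ hz₀K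
        have h3 : ⟪vv j, q j - p j⟫ - ⟪vv j, z₀ - p j⟫ = t j * ⟪vv j, w⟫ := by
          rw [← inner_sub_right, ← real_inner_smul_right]
          congr 1
          simp only [hqdef]
          module
        have h4 : ε * t j ≤ t j * ⟪vv j, w⟫ := by
          rw [← h3]
          have := hqp j
          linarith [h1 ▸ (le_refl (⟪vv j, q j - p j⟫))]
        have h5 := htpos j
        nlinarith
      have hpbound : ∀ j, ‖p j - z₀‖ ≤ 2 * (t j * ‖w‖) := by
        intro j
        have h1 : ‖q j - p j‖ ≤ t j * ‖w‖ := by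
          rw [← dist_eq_norm, ← hpdist j]
          calc Metric.infDist (q j) K ≤ dist (q j) z₀ := Metric.infDist_le_dist_of_mem hz₀K
            _ = t j * ‖w‖ := by
                rw [dist_eq_norm]
                have : q j - z₀ = t j • w := by simp only [hqdef]; module
                rw [this, norm_smul, Real.norm_eq_abs, abs_of_pos (htpos j)]
        have h2 : ‖q j - z₀‖ = t j * ‖w‖ := by
          have : q j - z₀ = t j • w := by simp only [hqdef]; module
          rw [this, norm_smul, Real.norm_eq_abs, abs_of_pos (htpos j)]
        calc ‖p j - z₀‖ = ‖(q j - z₀) - (q j - p j)‖ := by congr 1; abel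
          _ ≤ ‖q j - z₀‖ + ‖q j - p j‖ := norm_sub_le _ _
          _ ≤ t j * ‖w‖ + t j * ‖w‖ := by rw [h2]; linarith
          _ = 2 * (t j * ‖w‖) := by ring
      have htlim : Filter.Tendsto t Filter.atTop (nhds 0) :=
        tendsto_one_div_add_atTop_nhds_zero_nat
      have hplim : Filter.Tendsto p Filter.atTop (nhds z₀) := by
        have h1 : Filter.Tendsto (fun j => p j - z₀) Filter.atTop (nhds 0) := by
          apply squeeze_zero_norm hpbound
          have h2 : Filter.Tendsto (fun j => 2 * (t j * ‖w‖)) Filter.atTop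
              (nhds (2 * (0 * ‖w‖))) := ((htlim.mul_const _).const_mul _)
          simpa using h2
        have h3 := h1.add_const z₀
        simpa using h3
      have hsph : ∀ j, vv j ∈ Metric.sphere (0 : EuclideanSpace ℝ (Fin m)) 1 := by
        intro j
        rw [mem_sphere_zero_iff_norm]
        exact hvnorm j
      obtain ⟨v', hv'sph, φ, hφmono, hφlim⟩ :=
        (isCompact_sphere (0 : EuclideanSpace ℝ (Fin m)) 1).tendsto_subseq hsph
      have hv'ne : v' ≠ 0 := by
        intro h0
        rw [h0, mem_sphere_zero_iff_norm] at hv'sph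
        simp at hv'sph
      have hpφlim : Filter.Tendsto (fun k => p (φ k)) Filter.atTop (nhds z₀) :=
        hplim.comp hφmono.tendsto_atTop
      have hv'N : v' ∈ normalCone K z₀ := by
        intro x hx
        have hf : Filter.Tendsto (fun k => ⟪vv (φ k), x - p (φ k)⟫) Filter.atTop
            (nhds ⟪v', x - z₀⟫) :=
          hφlim.inner (tendsto_const_nhds.sub hpφlim)
        exact le_of_tendsto hf (Filter.Eventually.of_forall fun k => hvvob (φ k) x hx)
      have hv'w : ε ≤ ⟪v', w⟫ := by
        have hf : Filter.Tendsto (fun k => ⟪vv (φ k), w⟫) Filter.atTop (nhds ⟪v', w⟫) :=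
          hφlim.inner tendsto_const_nhds
        exact ge_of_tendsto hf (Filter.Eventually.of_forall fun k => hvw' (φ k))
      obtain ⟨τ, hτ0, hτeq⟩ := hvray v' hv'N
      rw [hτeq] at hv'w
      rw [real_inner_smul_left] at hv'w
      nlinarith
    -- putting things together
    have hAne : A ≠ 0 := by
      intro h0
      apply hz₀ne
      rw [← hw₁, h0]
      simp
    have hApos : (0:ℝ) < ‖A‖ := by
      rcases (norm_nonneg A).lt_or_eq with h | h
      · exact h
      · exact absurd (ContinuousLinearMap.opNorm_zero_iff A |>.mp h.symm) hAne
    have hεpos : (0:ℝ) < c₀ / (α * ‖A‖) := div_pos hc₀pos (mul_pos hα hApos)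
    obtain ⟨t, ht, htlt⟩ := htan _ hεpos
    obtain ⟨uw, huw⟩ := hwR
    set xt := w₁ + t • uw - ub with hxt
    have hAxt : A xt + b = z₀ + t • w := by
      rw [hxt, map_sub, map_add, map_smul, hw₁, huw, hub]
      abel
    have hup : t * c₀ / ‖A‖ ≤ Metric.infDist xt S := by
      have hSclosed : IsClosed S := by
        rw [hS]
        have hcont : Continuous fun x : EuclideanSpace ℝ (Fin n) => A x + b :=
          (A.continuous.add continuous_const)
        exact IsClosed.preimage hcont hclosed
      obtain ⟨y₀, hy₀S, hy₀dist⟩ := hSclosed.exists_infDist_eq_dist hSne xt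
      rw [hy₀dist]
      have hy₀K : A y₀ + b ∈ K := by rw [hS] at hy₀S; exact hy₀S
      have hy₀R : A y₀ + b ∈ Set.range ⇑A := ⟨y₀ + ub, by rw [map_add, hub]⟩
      obtain ⟨s, hs0, hseq⟩ := key _ ⟨hy₀R, hy₀K⟩
      have h1 : t * c₀ ≤ ‖A xt - A y₀‖ := by
        have hxx : A xt - A y₀ = (z₀ + t • w) - s • z₀ := by
          have hax : A xt = z₀ + t • w - b := by rw [← hAxt]; abel
          have hay : A y₀ = s • z₀ - b := by rw [← hseq]; abel
          rw [hax, hay]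
          abel
        rw [hxx]
        exact hlow t s (le_of_lt ht)
      have h2 : ‖A xt - A y₀‖ ≤ ‖A‖ * ‖xt - y₀‖ := by
        rw [← map_sub]
        exact A.le_opNorm _
      rw [dist_eq_norm, div_le_iff₀ hApos]
      nlinarith
    have hdown := hEB xt
    rw [hAxt] at hdown
    have h3 : α * Metric.infDist (z₀ + t • w) K < α * (c₀ / (α * ‖A‖) * t) :=
      mul_lt_mul_of_pos_left htlt hα
    have heq : α * (c₀ / (α * ‖A‖) * t) = t * c₀ / ‖A‖ := by
      field_simp
    rw [heq] at h3
    linarith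
end
end
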